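/- arXiv:1307.3113 — 5 statements merged into one kernel-verified Lean document; each statement's English description precedes it below -/
import Mathlib

section
/- In a Nash equilibrium graph of the network creation game with parameter α, for any vertex v, every vertex w at distance 2 from v has at most ⌊α−1⌋ children, where a child of w is a vertex u at distance i ≥ 3 from v admitting a shortest path from u to v whose vertex at distance 2 from v is w. -/
open scoped ENNReal

section NetworkCreation

variable {V : Type*} [Fintype V] [DecidableEq V]

/-- The undirected network formed by a strategy profile `S`:
`v` and `w` are adjacent iff one of them bought the edge to the other. -/
def netGraph (S : V → Finset V) : SimpleGraph V where
  Adj v w := v ≠ w ∧ (w ∈ S v ∨ v ∈ S w)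
  symm := ⟨fun _ _ h => ⟨h.1.symm, h.2.symm⟩⟩
  loopless := ⟨fun _ h => h.1 rfl⟩

instance (S : V → Finset V) : DecidableRel (netGraph S).Adj :=
  fun v w => inferInstanceAs (Decidable (v ≠ w ∧ (w ∈ S v ∨ v ∈ S w)))

/-- Individual cost of agent `v`: `α` per bought edge, plus the sum of the
graph distances from `v` to all vertices (`⊤` if some vertex is unreachable). -/
noncomputable def netCost (α : ℝ) (S : V → Finset V) (v : V) : ℝ≥0∞ :=
  ENNReal.ofReal α * (S v).card + ∑ w, ((netGraph S).edist v w : ℝ≥0∞)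

/-- (Weak) Nash equilibrium: no agent can strictly decrease its own cost by
unilaterally switching its bought-edge set to any other set of other vertices. -/
def IsNash (α : ℝ) (S : V → Finset V) : Prop :=
  ∀ (v : V) (T : Finset V), v ∉ T →
    netCost α S v ≤ netCost α (Function.update S v T) v

/-- Total social cost of a strategy profile. -/
noncomputable def socialCost (α : ℝ) (S : V → Finset V) : ℝ≥0∞ :=
  ∑ v, netCost α S v

end NetworkCreation

/-! Equilibria are connected, so the distance sums involved are finite and can be cancelled.
If `v` buys an edge to a vertex `w` with `d(v, w) = 2`, then `d(v, w)` drops to `1` and every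
`u` with `d(w, u) + 2 = d(v, u)` gets closer by at least one, since `v → w ⇝ u` is a path of
length `d(v, u) - 1`. These are `w` and its children, so the distance sum of `v` drops by at
least `#children + 1`, while its edge cost grows by at most `α`; equilibrium forces
`#children + 1 ≤ α`. -/

open Finset

theorem Finset.sum_add_card_le_sum {ι M : Type*} [Fintype ι] [AddCommMonoidWithOne M]
    [PartialOrder M] [IsOrderedAddMonoid M] {f g : ι → M} (s : Finset ι)
    (hle : ∀ i, f i ≤ g i) (hs : ∀ i ∈ s, f i + 1 ≤ g i) :
    ∑ i, f i + #s ≤ ∑ i, g i := by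
  classical
  calc ∑ i, f i + #s = ∑ i, (f i + if i ∈ s then 1 else 0) := by
        rw [sum_add_distrib, sum_ite_mem, univ_inter, sum_const, nsmul_one]
    _ ≤ ∑ i, g i := by
        gcongr with i
        split_ifs with hi
        exacts [hs i hi, (add_zero (f i)).trans_le (hle i)]

namespace SimpleGraph

variable {V : Type*} {G G' : SimpleGraph V} {u v w : V}

theorem sum_edist_ne_top_iff [Fintype V] :
    ∑ u, (G.edist v u : ℝ≥0∞) ≠ ⊤ ↔ ∀ u, G.Reachable v u := by
  simp [edist_ne_top_iff_reachable]

theorem edist_add_one_le_of_adj_of_edist_add_two_eq (hle : G ≤ G') (hadj : G'.Adj v w)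
    (hu : G.edist w u + 2 = G.edist v u) : G'.edist v u + 1 ≤ G.edist v u :=
  calc G'.edist v u + 1 ≤ G'.edist v w + G'.edist w u + 1 := by gcongr; exact G'.edist_triangle
    _ = G'.edist w u + 2 := by rw [edist_eq_one_iff_adj.2 hadj]; ring
    _ ≤ G.edist w u + 2 := by gcongr
    _ = G.edist v u := hu

theorem sum_edist_add_card_children_le [Fintype V] (hle : G ≤ G') (hadj : G'.Adj v w)
    (hw : G.edist v w = 2) :
    ∑ u, (G'.edist v u : ℝ≥0∞) +
        ((#{u | 3 ≤ G.edist v u ∧ G.edist w u + 2 = G.edist v u} + 1 : ℕ) : ℝ≥0∞) ≤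
      ∑ u, (G.edist v u : ℝ≥0∞) := by
  classical
  set C : Finset V := {u | 3 ≤ G.edist v u ∧ G.edist w u + 2 = G.edist v u}
  have hwC : w ∉ C := by norm_num [C, hw]
  rw [← card_insert_of_notMem hwC]
  refine sum_add_card_le_sum _ (fun u => by exact_mod_cast edist_anti hle) fun u hu => ?_
  have hu : G.edist w u + 2 = G.edist v u := by
    rcases mem_insert.1 hu with rfl | hu
    · simp [hw]
    · exact (mem_filter.1 hu).2.2
  exact_mod_cast edist_add_one_le_of_adj_of_edist_add_two_eq hle hadj hu

end SimpleGraph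

section NetworkCreation

variable {V : Type*} [DecidableEq V] {S : V → Finset V} {v w : V}

-- Erasing `v` keeps the deviation admissible for `IsNash` even when `v ∈ S v`.
def buyEdge (S : V → Finset V) (v w : V) : Finset V :=
  insert w ((S v).erase v)

theorem notMem_buyEdge (hvw : v ≠ w) : v ∉ buyEdge S v w := by
  simp [buyEdge, hvw]

theorem card_buyEdge_le : #(buyEdge S v w) ≤ #(S v) + 1 :=
  (card_insert_le _ _).trans (Nat.add_le_add_right card_erase_le 1)

theorem netGraph_le_update_buyEdge :
    netGraph S ≤ netGraph (Function.update S v (buyEdge S v w)) := by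
  rintro x y ⟨hxy, hx | hy⟩ <;> refine ⟨hxy, ?_⟩
  · by_cases hxv : x = v
    · subst hxv; simp [buyEdge, hxy.symm, hx]
    · simp [hxv, hx]
  · by_cases hyv : y = v
    · subst hyv; simp [buyEdge, hxy, hy]
    · simp [hyv, hy]

theorem netGraph_update_buyEdge_adj (hvw : v ≠ w) :
    (netGraph (Function.update S v (buyEdge S v w))).Adj v w :=
  ⟨hvw, Or.inl (by simp [buyEdge])⟩

variable [Fintype V] {α : ℝ}

omit [DecidableEq V] in
theorem netCost_ne_top_iff : netCost α S v ≠ ⊤ ↔ ∀ u, (netGraph S).Reachable v u := by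
  rw [netCost, ENNReal.add_ne_top, SimpleGraph.sum_edist_ne_top_iff]
  simp [ENNReal.mul_ne_top]

theorem IsNash.netCost_ne_top (hNash : IsNash α S) (v : V) : netCost α S v ≠ ⊤ := by
  refine ne_top_of_le_ne_top ?_ (hNash v (univ.erase v) (notMem_erase v _))
  refine netCost_ne_top_iff.2 fun u => ?_
  obtain rfl | hvu := eq_or_ne v u
  · rfl
  · exact SimpleGraph.Adj.reachable ⟨hvu, Or.inl (by simp [hvu.symm])⟩

theorem IsNash.sum_edist_le_add_buyEdge (hNash : IsNash α S) (hvw : v ≠ w) :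
    ∑ u, ((netGraph S).edist v u : ℝ≥0∞) ≤
      ENNReal.ofReal α +
        ∑ u, ((netGraph (Function.update S v (buyEdge S v w))).edist v u : ℝ≥0∞) := by
  have hcard : ENNReal.ofReal α * #(buyEdge S v w) ≤
      ENNReal.ofReal α * #(S v) + ENNReal.ofReal α := by
    rw [← mul_add_one]; gcongr; exact_mod_cast card_buyEdge_le
  have h := hNash v _ (notMem_buyEdge (S := S) hvw)
  rw [netCost, netCost, Function.update_self] at h
  replace h := h.trans (add_le_add_left hcard _)
  rw [add_assoc] at h
  exact ENNReal.le_of_add_le_add_left (ENNReal.mul_ne_top ENNReal.ofReal_ne_top (by simp)) h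

end NetworkCreation

theorem stmt0_general {V : Type*} [Fintype V] [DecidableEq V] (α : ℝ)
    (S : V → Finset V) (hNash : IsNash α S)
    (v w : V) (hw : (netGraph S).edist v w = 2) :
    (({u : V | 3 ≤ (netGraph S).edist v u ∧
        (netGraph S).edist w u + 2 = (netGraph S).edist v u}.ncard : ℤ))
      ≤ ⌊α - 1⌋ := by
  have hvw : v ≠ w := by rintro rfl; simp at hw
  have hle : netGraph S ≤ netGraph (Function.update S v (buyEdge S v w)) :=
    netGraph_le_update_buyEdge
  have hsave := SimpleGraph.sum_edist_add_card_children_le hle (netGraph_update_buyEdge_adj hvw) hw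
  have hfin := SimpleGraph.sum_edist_ne_top_iff.2 fun u =>
    (netCost_ne_top_iff.1 (hNash.netCost_ne_top v) u).mono hle
  have hC := ENNReal.le_of_add_le_add_left hfin
    (hsave.trans ((hNash.sum_edist_le_add_buyEdge hvw).trans_eq (add_comm _ _)))
  rw [← ENNReal.ofReal_natCast, ENNReal.ofReal_le_ofReal_iff'] at hC
  rw [Set.ncard_eq_toFinset_card', Set.toFinset_ofPred, Int.le_floor, Int.cast_natCast,
    le_sub_iff_add_le]
  exact_mod_cast hC.resolve_right (not_le.2 (by positivity))

/-- In a Nash equilibrium, every vertex `w` at distance 2 from `v` has at most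
`⌊α - 1⌋` children, where a child of `w` is a vertex `u` at distance `≥ 3` from `v`
admitting a shortest path to `v` whose distance-2 vertex is `w`
(equivalently, `dist w u + 2 = dist v u`). -/
theorem stmt0 {V : Type*} [Fintype V] [DecidableEq V] (α : ℝ) (hα : 0 < α)
    (S : V → Finset V) (hS : ∀ v, v ∉ S v) (hNash : IsNash α S)
    (v w : V) (hw : (netGraph S).edist v w = 2) :
    (({u : V | 3 ≤ (netGraph S).edist v u ∧
        (netGraph S).edist w u + 2 = (netGraph S).edist v u}.ncard : ℤ))
      ≤ ⌊α - 1⌋ :=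
  stmt0_general α S hNash v w hw
end

section
/- In a connected Nash equilibrium graph of the network creation game on n vertices with parameter α > 1, if n > α³, then the graph has diameter at most 4. -/
open scoped ENNReal

/-!
Suppose `d(v, w) ≥ 5`. A vertex `u` at distance at least `4` from some `x` has degree at most
`α - 3`: by buying the edge `xu`, agent `x` would gain `3` on `u` and `1` on each neighbour of `u`.
With `x = w` this bounds the degree of `v` and of each of its neighbours, so
`|N₂(v)| + deg v ≤ deg v · (α - 3)`. On the other hand, buying edges to all of `N₂(v)` brings every
vertex outside the closed neighbourhood of `v` one step closer, so `n ≤ deg v + α |N₂(v)| + 1`.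
Together `n ≤ deg v · (α² - 4α + 1) + 1` with `0 ≤ deg v ≤ α - 3`, and this is below `α³` at both
ends of that range.
-/

open Finset

namespace SimpleGraph

variable {V : Type*} {G : SimpleGraph V}

lemma Reachable.exists_dist_eq_of_le_dist {u w : V} (hr : G.Reachable u w) {k : ℕ}
    (hk : k ≤ G.dist u w) : ∃ z, G.dist u z = k ∧ G.dist z w = G.dist u w - k := by
  obtain ⟨p, hp⟩ := hr.exists_walk_length_eq_dist
  refine ⟨p.getVert k, ?_, ?_⟩
  · rw [← length_eq_dist_of_subwalk hp (p.isSubwalk_take k), Walk.take_length]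
    omega
  · rw [← length_eq_dist_of_subwalk hp (p.isSubwalk_drop k), Walk.drop_length, hp]

variable [Fintype V] [DecidableEq V] [DecidableRel G.Adj]

lemma card_dist_eq_two_add_degree_le_sum_degree (v : V) :
    #{w | G.dist v w = 2} + G.degree v ≤ ∑ y ∈ G.neighborFinset v, G.degree y := by
  have hsub : ({w | G.dist v w = 2} : Finset V) ⊆
      (G.neighborFinset v).biUnion fun y => (G.neighborFinset y).erase v := by
    intro z hz
    have hz : G.dist v z = 2 := (Finset.mem_filter.mp hz).2
    have hr : G.Reachable v z := Reachable.of_dist_ne_zero (by omega)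
    obtain ⟨y, hvy, hyz⟩ := hr.exists_dist_eq_of_le_dist (k := 1) (by omega)
    rw [hz] at hyz
    refine Finset.mem_biUnion.mpr ⟨y, ?_, Finset.mem_erase.mpr ⟨?_, ?_⟩⟩
    · exact (mem_neighborFinset _ _ _).mpr (dist_eq_one_iff_adj.mp hvy)
    · rintro rfl
      simp at hz
    · exact (mem_neighborFinset _ _ _).mpr (dist_eq_one_iff_adj.mp hyz)
  calc #{w | G.dist v w = 2} + G.degree v
      ≤ ∑ y ∈ G.neighborFinset v, #((G.neighborFinset y).erase v) + G.degree v := by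
        gcongr
        exact (Finset.card_le_card hsub).trans Finset.card_biUnion_le
    _ = ∑ y ∈ G.neighborFinset v, G.degree y := by
        rw [← card_neighborFinset_eq_degree, Finset.card_eq_sum_ones, ← Finset.sum_add_distrib]
        refine Finset.sum_congr rfl fun y hy => Finset.card_erase_add_one ?_
        rw [mem_neighborFinset] at hy ⊢
        exact hy.symm

lemma Connected.card_le_card_two_le_dist_add_degree (hconn : G.Connected) (v : V) :
    Fintype.card V ≤ #{w | 2 ≤ G.dist v w} + G.degree v + 1 := by
  have hnear : ({w | ¬ 2 ≤ G.dist v w} : Finset V) ⊆ insert v (G.neighborFinset v) := by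
    intro w hw
    have hw : G.dist v w < 2 := by simpa using hw
    interval_cases h : G.dist v w
    · simp [(hconn.dist_eq_zero_iff).mp h]
    · simp [dist_eq_one_iff_adj.mp h]
  calc Fintype.card V = #{w | 2 ≤ G.dist v w} + #{w | ¬ 2 ≤ G.dist v w} :=
        (Finset.card_filter_add_card_filter_not _).symm
    _ ≤ #{w | 2 ≤ G.dist v w} + (G.degree v + 1) := by
        gcongr
        exact (Finset.card_le_card hnear).trans (Finset.card_insert_le _ _)

end SimpleGraph

section NetworkCreation

open SimpleGraph

variable {V : Type*} {α : ℝ} {S : V → Finset V}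

lemma netGraph_le_update [DecidableEq V] {v : V} {T : Finset V} (hsub : S v ⊆ T) :
    netGraph S ≤ netGraph (Function.update S v T) := by
  have hmono : ∀ x, S x ⊆ Function.update S v T x := fun x => by
    rcases eq_or_ne x v with rfl | hx
    · simpa using hsub
    · simp [hx]
  exact fun x y ⟨hne, hmem⟩ => ⟨hne, hmem.imp (fun h => hmono x h) (fun h => hmono y h)⟩

lemma netGraph_update_adj [DecidableEq V] {v u : V} {T : Finset V} (hvT : v ∉ T) (hu : u ∈ T) :
    (netGraph (Function.update S v T)).Adj v u :=
  ⟨fun h => hvT (h ▸ hu), Or.inl (by simpa using hu)⟩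

lemma netCost_eq_ofReal [Fintype V] (hα : 0 ≤ α) (hconn : (netGraph S).Connected) (v : V) :
    netCost α S v = ENNReal.ofReal (α * #(S v) + ∑ w, ((netGraph S).dist v w : ℝ)) := by
  rw [ENNReal.ofReal_add (by positivity) (by positivity), ENNReal.ofReal_mul hα,
    ENNReal.ofReal_natCast, ENNReal.ofReal_sum_of_nonneg (fun _ _ => by positivity)]
  refine congrArg _ (Finset.sum_congr rfl fun w _ => ?_)
  rw [← (hconn v w).coe_dist_eq_edist, ENat.toENNReal_coe, ENNReal.ofReal_natCast]

/-- If switching from `S v` to `T ⊇ S v` shortens the distance from `v` to each `w` by at least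
`c w`, the total saving is at most the price of the extra edges. -/
lemma IsNash.mul_card_add_sum_le [Fintype V] [DecidableEq V] (hα : 0 ≤ α) (hNash : IsNash α S)
    (hconn : (netGraph S).Connected) {v : V} {T : Finset V} (hvT : v ∉ T) (hsub : S v ⊆ T)
    (c : V → ℝ)
    (hc : ∀ w, ((netGraph (Function.update S v T)).dist v w : ℝ) + c w ≤ (netGraph S).dist v w) :
    α * #(S v) + ∑ w, c w ≤ α * #T := by
  have hconn' := hconn.mono (netGraph_le_update hsub)
  have hcost := hNash v T hvT
  rw [netCost_eq_ofReal hα hconn, netCost_eq_ofReal hα hconn', Function.update_self,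
    ENNReal.ofReal_le_ofReal_iff (by positivity)] at hcost
  have hsum := Finset.sum_le_sum fun w (_ : w ∈ Finset.univ) => hc w
  rw [Finset.sum_add_distrib] at hsum
  linarith

variable [Fintype V] [DecidableEq V]

lemma IsNash.degree_add_three_le (hα : 0 ≤ α) (hS : ∀ v, v ∉ S v) (hNash : IsNash α S)
    (hconn : (netGraph S).Connected) {x u : V} (h4 : 4 ≤ (netGraph S).dist x u) :
    ((netGraph S).degree u : ℝ) + 3 ≤ α := by
  set G := netGraph S
  have hxu : x ≠ u := by
    rintro rfl
    simp at h4
  set T := insert u (S x)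
  have hxT : x ∉ T := by simp [T, hxu, hS x]
  have hsub : S x ⊆ T := Finset.subset_insert _ _
  set G' := netGraph (Function.update S x T)
  have hGG' : G ≤ G' := netGraph_le_update hsub
  have hxu' : G'.Adj x u := netGraph_update_adj hxT (Finset.mem_insert_self _ _)
  have hc : ∀ w, (G'.dist x w : ℝ) + ((if w = u then 3 else 0) + (if G.Adj u w then 1 else 0))
      ≤ G.dist x w := by
    intro w
    by_cases hwu : w = u
    · subst hwu
      have := dist_eq_one_iff_adj.mpr hxu'
      simp only [G.irrefl, if_false]
      exact_mod_cast (by omega : G'.dist x w + 3 ≤ G.dist x w)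
    by_cases huw : G.Adj u w
    · have h2 : G'.dist x w ≤ 2 := dist_le ((Walk.nil.cons (hGG' huw)).cons hxu')
      have h3 : G.dist x u ≤ G.dist x w + 1 := by
        simpa [dist_eq_one_iff_adj.mpr huw.symm] using
          hconn.dist_triangle (u := x) (v := w) (w := u)
      simp only [if_neg hwu, if_pos huw, zero_add]
      exact_mod_cast (by omega : G'.dist x w + 1 ≤ G.dist x w)
    · simp only [if_neg hwu, if_neg huw]
      simpa using (hconn x w).dist_anti hGG'
  have hsum : ∑ w, (((if w = u then 3 else 0) + (if G.Adj u w then 1 else 0)) : ℝ)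
      = 3 + G.degree u := by
    simp [Finset.sum_add_distrib, Finset.sum_boole, ← card_neighborFinset_eq_degree,
      neighborFinset_eq_filter]
  have hT : (#T : ℝ) ≤ #(S x) + 1 := by exact_mod_cast Finset.card_insert_le _ _
  have := hNash.mul_card_add_sum_le hα hconn hxT hsub _ hc
  rw [hsum] at this
  nlinarith

lemma IsNash.card_le_degree_add_mul_card_dist_eq_two (hα : 0 ≤ α) (hS : ∀ v, v ∉ S v)
    (hNash : IsNash α S) (hconn : (netGraph S).Connected) (v : V) :
    (Fintype.card V : ℝ) ≤
      (netGraph S).degree v + α * #{w | (netGraph S).dist v w = 2} + 1 := by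
  set G := netGraph S
  set N₂ : Finset V := {w | G.dist v w = 2}
  set T := S v ∪ N₂
  have hvT : v ∉ T := by simp [T, N₂, hS v]
  have hsub : S v ⊆ T := Finset.subset_union_left
  set G' := netGraph (Function.update S v T)
  have hGG' : G ≤ G' := netGraph_le_update hsub
  have hc : ∀ w, (G'.dist v w : ℝ) + (if 2 ≤ G.dist v w then 1 else 0) ≤ G.dist v w := by
    intro w
    by_cases hw : 2 ≤ G.dist v w
    · obtain ⟨z, hvz, hzw⟩ := (hconn v w).exists_dist_eq_of_le_dist hw
      have hvz' : G'.dist v z = 1 :=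
        dist_eq_one_iff_adj.mpr (netGraph_update_adj hvT (by simp [T, N₂, hvz]))
      have hzw' := (hconn z w).dist_anti hGG'
      have := (hconn.mono hGG').dist_triangle (u := v) (v := z) (w := w)
      rw [if_pos hw]
      exact_mod_cast (by omega : G'.dist v w + 1 ≤ G.dist v w)
    · rw [if_neg hw, add_zero]
      exact_mod_cast (hconn v w).dist_anti hGG'
  have hT : (#T : ℝ) ≤ #(S v) + #N₂ := by exact_mod_cast Finset.card_union_le _ _
  have hsave := hNash.mul_card_add_sum_le hα hconn hvT hsub _ hc
  rw [Finset.sum_boole] at hsave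
  have hcount : (Fintype.card V : ℝ) ≤ #{w | 2 ≤ G.dist v w} + G.degree v + 1 := by
    exact_mod_cast hconn.card_le_card_two_le_dist_add_degree v
  nlinarith

end NetworkCreation

/-- In a connected Nash equilibrium on `n` vertices with `α > 1` and `n > α³`,
the graph has diameter at most 4. -/
theorem stmt3 {V : Type*} [Fintype V] [DecidableEq V] (α : ℝ) (hα : 1 < α)
    (S : V → Finset V) (hS : ∀ v, v ∉ S v) (hNash : IsNash α S)
    (hconn : (netGraph S).Connected)
    (hn : α ^ 3 < (Fintype.card V : ℝ)) :
    ∀ v w : V, (netGraph S).dist v w ≤ 4 := by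
  intro v w
  by_contra! hfar
  set G := netGraph S
  have hα0 : 0 ≤ α := by linarith
  have hdeg : ∀ y, G.dist v y ≤ 1 → (G.degree y : ℝ) + 3 ≤ α := fun y hy =>
    hNash.degree_add_three_le hα0 hS hconn (x := w) (u := y) <| by
      have := hconn.dist_triangle (u := v) (v := y) (w := w)
      show 4 ≤ G.dist w y
      rw [SimpleGraph.dist_comm]
      omega
  have hdv := hdeg v (by simp)
  have hsum : ∑ y ∈ G.neighborFinset v, (G.degree y : ℝ) ≤ G.degree v * (α - 3) := by
    calc ∑ y ∈ G.neighborFinset v, (G.degree y : ℝ) ≤ ∑ y ∈ G.neighborFinset v, (α - 3) :=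
          Finset.sum_le_sum fun y hy => by
            have hvy := SimpleGraph.dist_eq_one_iff_adj.mpr (G.mem_neighborFinset v y |>.mp hy)
            linarith [hdeg y hvy.le]
      _ = G.degree v * (α - 3) := by
          rw [Finset.sum_const, G.card_neighborFinset_eq_degree, nsmul_eq_mul]
  have hN₂ : (#{w | G.dist v w = 2} : ℝ) + G.degree v ≤
      ∑ y ∈ G.neighborFinset v, (G.degree y : ℝ) := by
    exact_mod_cast G.card_dist_eq_two_add_degree_le_sum_degree v
  have hcard := hNash.card_le_degree_add_mul_card_dist_eq_two hα0 hS hconn v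
  nlinarith [mul_nonneg (sub_nonneg.mpr hdv) (sub_nonneg.mpr hα.le)]
end

section
/- Let G be a graph on n vertices in which every vertex has degree greater than √(n log n), with n ≥ 2. Then for every vertex w, there exists a set T of at most ⌈√(n log n)⌉ vertices such that adding the edges from w to T makes every vertex of G within distance 2 of w. -/
/-!
In an `N`-vertex graph of minimum degree `δ`, double counting gives for every set `U` a vertex
adjacent to at least `δ |U| / N` vertices of `U`. Choosing such a vertex for the set of vertices not
yet dominated, `k` greedy steps leave at most `N (1 - δ / N) ^ k < N e ^ (-δ k / N)` of them, which
is at most `1`, so none, once `δ k ≥ N log N`. With `δ = k = ⌈√(n log n)⌉`, joining `w` to the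
dominating set obtained puts every vertex within distance `2` of `w`.
-/

open Finset

theorem mul_one_sub_div_pow_lt_one {N δ : ℝ} {k : ℕ} (hN : 0 < N) (hδ : 0 < δ) (hδN : δ ≤ N)
    (hk : k ≠ 0) (h : N * Real.log N ≤ δ * k) : N * (1 - δ / N) ^ k < 1 := by
  calc N * (1 - δ / N) ^ k < N * Real.exp (-(δ / N)) ^ k := by
        gcongr
        · rw [sub_nonneg, div_le_one hN]; exact hδN
        · exact Real.one_sub_lt_exp_neg (by positivity)
    _ = N * Real.exp (-(δ * k / N)) := by rw [← Real.exp_nat_mul]; ring_nf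
    _ ≤ N * Real.exp (-Real.log N) := by
        gcongr
        rw [le_div_iff₀ hN]; linarith
    _ = 1 := by rw [Real.exp_neg, Real.exp_log hN]; field_simp

namespace SimpleGraph

variable {V : Type*} (G : SimpleGraph V)

theorem edist_sup_fromEdgeSet_le_two {T : Finset V} {w x : V}
    (hx : x ∈ T ∨ ∃ t ∈ T, G.Adj t x) :
    (G ⊔ fromEdgeSet {e | ∃ t ∈ T, e = s(w, t)}).edist w x ≤ 2 := by
  set H := G ⊔ fromEdgeSet {e | ∃ t ∈ T, e = s(w, t)}
  have hwT : ∀ t ∈ T, H.edist w t ≤ 1 := by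
    intro t ht
    by_cases htw : w = t
    · simp [htw]
    · exact (edist_eq_one_iff_adj.2 (Or.inr ⟨⟨t, ht, rfl⟩, htw⟩)).le
  rcases hx with hxT | ⟨t, ht, htx⟩
  · exact (hwT x hxT).trans (by norm_num)
  · calc H.edist w x ≤ H.edist w t + H.edist t x := SimpleGraph.edist_triangle
      _ ≤ 1 + 1 := add_le_add (hwT t ht) (edist_eq_one_iff_adj.2 (Or.inl htx)).le
      _ = 2 := by norm_num

variable [Fintype V] [DecidableRel G.Adj]

theorem lt_card_of_forall_le_degree [Nonempty V] {δ : ℕ} (hδ : ∀ v, δ ≤ G.degree v) :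
    δ < Fintype.card V :=
  (hδ (Classical.arbitrary V)).trans_lt (G.degree_lt_card_verts _)

variable [DecidableEq V]

def undominated (T : Finset V) : Finset V :=
  {x | x ∉ T ∧ ∀ t ∈ T, ¬G.Adj t x}

theorem sum_card_neighborFinset_inter (U : Finset V) :
    ∑ v, #(G.neighborFinset v ∩ U) = ∑ u ∈ U, G.degree u := by
  convert sum_card_bipartiteAbove_eq_sum_card_bipartiteBelow G.Adj (s := univ) (t := U) using 3
  · ext; simp [bipartiteAbove, and_comm]
  · rw [← card_neighborFinset_eq_degree, neighborFinset_eq_filter]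
    congr 1; ext; simp [bipartiteBelow, adj_comm]

theorem exists_card_mul_le_card_mul_card_neighborFinset_inter [Nonempty V] {δ : ℕ}
    (hδ : ∀ v, δ ≤ G.degree v) (U : Finset V) :
    ∃ v, #U * δ ≤ Fintype.card V * #(G.neighborFinset v ∩ U) := by
  have hsum : ∑ _v : V, #U * δ ≤ ∑ v, Fintype.card V * #(G.neighborFinset v ∩ U) :=
    calc ∑ _v : V, #U * δ = Fintype.card V * ∑ _u ∈ U, δ := by simp [mul_comm]
      _ ≤ Fintype.card V * ∑ u ∈ U, G.degree u := by gcongr with u; exact hδ u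
      _ = ∑ v, Fintype.card V * #(G.neighborFinset v ∩ U) := by
        rw [← mul_sum, sum_card_neighborFinset_inter]
  obtain ⟨v, -, hv⟩ := exists_le_of_sum_le univ_nonempty hsum
  exact ⟨v, hv⟩

theorem undominated_insert_subset (v : V) (T : Finset V) :
    G.undominated (insert v T) ⊆ G.undominated T \ G.neighborFinset v := by
  intro x
  simp +contextual [undominated]

theorem card_undominated_insert_add_card_inter_le (v : V) (T : Finset V) :
    #(G.undominated (insert v T)) + #(G.neighborFinset v ∩ G.undominated T) ≤
      #(G.undominated T) := by
  rw [inter_comm, ← card_sdiff_add_card_inter (G.undominated T) (G.neighborFinset v)]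
  gcongr
  exact G.undominated_insert_subset v T

theorem exists_card_undominated_insert_le [Nonempty V] {δ : ℕ} (hδ : ∀ v, δ ≤ G.degree v)
    (T : Finset V) : ∃ v, (#(G.undominated (insert v T)) : ℝ) ≤
      #(G.undominated T) * (1 - δ / Fintype.card V) := by
  obtain ⟨v, hv⟩ := G.exists_card_mul_le_card_mul_card_neighborFinset_inter hδ (G.undominated T)
  refine ⟨v, ?_⟩
  have hN : (0 : ℝ) < Fintype.card V := by exact_mod_cast Fintype.card_pos
  have hcovered : (#(G.undominated T) : ℝ) * (δ / Fintype.card V) ≤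
      #(G.neighborFinset v ∩ G.undominated T) := by
    rw [mul_div_assoc', div_le_iff₀ hN, mul_comm _ (Fintype.card V : ℝ)]
    exact_mod_cast hv
  have hstep : (#(G.undominated (insert v T)) : ℝ) + #(G.neighborFinset v ∩ G.undominated T) ≤
      #(G.undominated T) := by exact_mod_cast G.card_undominated_insert_add_card_inter_le v T
  linarith

theorem exists_card_le_card_undominated_le [Nonempty V] {δ : ℕ} (hδ : ∀ v, δ ≤ G.degree v)
    (k : ℕ) : ∃ T : Finset V, #T ≤ k ∧
      (#(G.undominated T) : ℝ) ≤ Fintype.card V * (1 - δ / Fintype.card V) ^ k := by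
  induction k with
  | zero => exact ⟨∅, by simp, by simpa using card_le_univ _⟩
  | succ k ih =>
    obtain ⟨T, hTk, hT⟩ := ih
    obtain ⟨v, hv⟩ := G.exists_card_undominated_insert_le hδ T
    refine ⟨insert v T, (card_insert_le v T).trans (by omega), ?_⟩
    have hδN : (δ : ℝ) / Fintype.card V ≤ 1 := by
      rw [div_le_one (by exact_mod_cast Fintype.card_pos)]
      exact_mod_cast (G.lt_card_of_forall_le_degree hδ).le
    calc (#(G.undominated (insert v T)) : ℝ)
        ≤ #(G.undominated T) * (1 - δ / Fintype.card V) := hv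
      _ ≤ Fintype.card V * (1 - δ / Fintype.card V) ^ k * (1 - δ / Fintype.card V) := by gcongr
      _ = Fintype.card V * (1 - δ / Fintype.card V) ^ (k + 1) := by ring

theorem exists_dominating_of_card_mul_log_le [Nonempty V] {δ k : ℕ} (hδ : ∀ v, δ ≤ G.degree v)
    (hδ₀ : 0 < δ) (hk : k ≠ 0) (hδk : Fintype.card V * Real.log (Fintype.card V) ≤ δ * k) :
    ∃ T : Finset V, #T ≤ k ∧ ∀ x, x ∈ T ∨ ∃ t ∈ T, G.Adj t x := by
  obtain ⟨T, hTk, hT⟩ := G.exists_card_le_card_undominated_le hδ k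
  have hlt := mul_one_sub_div_pow_lt_one (by exact_mod_cast Fintype.card_pos)
    (by exact_mod_cast hδ₀) (by exact_mod_cast (G.lt_card_of_forall_le_degree hδ).le) hk hδk
  have hempty : G.undominated T = ∅ := by
    rw [← card_eq_zero, ← Nat.lt_one_iff]
    exact_mod_cast hT.trans_lt hlt
  refine ⟨T, hTk, fun x => ?_⟩
  by_contra! hx
  have : x ∈ G.undominated T := mem_filter.2 ⟨mem_univ x, hx⟩
  simp [hempty] at this

end SimpleGraph

theorem stmt6_general {n : ℕ} (G : SimpleGraph (Fin n)) [DecidableRel G.Adj]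
    (hdeg : ∀ v : Fin n, Real.sqrt (n * Real.log n) < (G.degree v : ℝ))
    (w : Fin n) :
    ∃ T : Finset (Fin n),
      (T.card : ℤ) ≤ ⌈Real.sqrt (n * Real.log n)⌉ ∧
      ∀ x : Fin n,
        (G ⊔ SimpleGraph.fromEdgeSet {e | ∃ t ∈ T, e = s(w, t)}).edist w x ≤ 2 := by
  set r := Real.sqrt (n * Real.log n)
  have hn : 1 < n := by
    have hpos : 0 < G.degree w := by exact_mod_cast (Real.sqrt_nonneg _).trans_lt (hdeg w)
    have hlt : G.degree w < n := by simpa using G.degree_lt_card_verts w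
    omega
  have hr : 0 < r :=
    Real.sqrt_pos.2 (mul_pos (by positivity) (Real.log_pos (by exact_mod_cast hn)))
  have hδ : ∀ v, ⌈r⌉₊ ≤ G.degree v := fun v => Nat.ceil_le.2 (hdeg v).le
  have hsq : n * Real.log n ≤ ⌈r⌉₊ * ⌈r⌉₊ :=
    calc n * Real.log n = r * r := (Real.mul_self_sqrt (by positivity)).symm
      _ ≤ ⌈r⌉₊ * ⌈r⌉₊ := by gcongr <;> exact Nat.le_ceil r
  have : Nonempty (Fin n) := ⟨w⟩
  obtain ⟨T, hTc, hT⟩ := G.exists_dominating_of_card_mul_log_le hδ (Nat.ceil_pos.2 hr)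
    (Nat.ceil_pos.2 hr).ne' (by simpa using hsq)
  refine ⟨T, ?_, fun x => G.edist_sup_fromEdgeSet_le_two (hT x)⟩
  rw [← Int.natCast_ceil_eq_ceil hr.le]
  exact_mod_cast hTc

/-- If every vertex of a graph on `n ≥ 2` vertices has degree greater than
`√(n log n)`, then for every vertex `w` there is a set `T` of at most
`⌈√(n log n)⌉` vertices such that adding the edges from `w` to `T` puts every
vertex within distance 2 of `w`. -/
theorem stmt6 {n : ℕ} (hn : 2 ≤ n) (G : SimpleGraph (Fin n)) [DecidableRel G.Adj]
    (hdeg : ∀ v : Fin n, Real.sqrt (n * Real.log n) < (G.degree v : ℝ))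
    (w : Fin n) :
    ∃ T : Finset (Fin n),
      (T.card : ℤ) ≤ ⌈Real.sqrt (n * Real.log n)⌉ ∧
      ∀ x : Fin n,
        (G ⊔ SimpleGraph.fromEdgeSet {e | ∃ t ∈ T, e = s(w, t)}).edist w x ≤ 2 :=
  stmt6_general G hdeg w
end

section
/- For integer α ≥ 2, the following strategy profile on n = αk vertices is a (weak) Nash equilibrium of the network creation game: vertices v_1,…,v_k form a clique with each edge bought by one arbitrary endpoint, and each v_i additionally buys edges to α−1 private leaves l_{i,1},…,l_{i,α−1}; no leaf buys any edge. -/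
open scoped ENNReal

/-!
Write an agent's cost as a sum of per-vertex charges: `α` if it buys the edge to `w`, plus the
distance to `w`, and compare the deviator's old and new charges star by star, a star being a
clique vertex with its leaves. A leaf that the deviator does not buy is reached only through
its centre, so it lies one step further away than the centre; a clique vertex that drops one
of its own leaves disconnects it. On a foreign star the two competing configurations, the
centre bought at price `α` with its leaves at distance two, or the centre at distance two with
its leaves at distance three (a leaf bought directly costs `α + 1 ≥ 3`), cost the same:
`(α + 1) + 2(α - 1) = 2 + 3(α - 1)`.
-/

namespace SimpleGraph

variable {V : Type*} {G : SimpleGraph V} {u v w : V}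

lemma two_le_edist_of_not_adj (hne : u ≠ v) (h : ¬G.Adj u v) : 2 ≤ G.edist u v := by
  have h1 : 1 < G.edist u v := not_le.1 fun h' => by
    rcases edist_le_one_iff_adj_or_eq.1 h' with h' | h' <;> contradiction
  simpa [one_add_one_eq_two] using Order.add_one_le_of_lt h1

lemma edist_add_one_le_of_forall_adj_eq (hvw : v ≠ w) (hu : ∀ x, G.Adj w x → x = u) :
    G.edist v u + 1 ≤ G.edist v w := by
  rw [edist_comm (u := v) (v := w)]
  rcases eq_or_ne (G.edist w v) ⊤ with htop | hfin
  · simp [htop]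
  obtain ⟨p, hp⟩ := exists_walk_of_edist_ne_top hfin
  cases p with
  | nil => exact absurd rfl hvw
  | cons hadj q =>
    obtain rfl := hu _ hadj
    rw [← hp, Walk.length_cons, Nat.cast_add_one, edist_comm]
    gcongr
    exact edist_le q

lemma edist_eq_top_of_forall_not_adj (hvw : v ≠ w) (hw : ∀ x, ¬G.Adj w x) :
    G.edist v w = ⊤ :=
  edist_eq_top_of_not_reachable fun hr => by
    obtain ⟨p⟩ := hr.symm
    cases p with
    | nil => exact hvw rfl
    | cons hadj _ => exact hw _ hadj

end SimpleGraph

section Deviation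

variable {V : Type*} [DecidableEq V]

noncomputable def charge (a : ℕ) (S : V → Finset V) (v w : V) : ℕ∞ :=
  (if w ∈ S v then (a : ℕ∞) else 0) + (netGraph S).edist v w

lemma netCost_eq_sum_charge [Fintype V] (a : ℕ) (S : V → Finset V) (v : V) :
    netCost a S v = ((∑ w, charge a S v w : ℕ∞) : ℝ≥0∞) := by
  have hcast : ((∑ w, charge a S v w : ℕ∞) : ℝ≥0∞) = ∑ w, (charge a S v w : ℝ≥0∞) :=
    map_sum ENat.toENNRealRingHom _ _
  rw [hcast]
  simp [charge, netCost, Finset.sum_add_distrib, Finset.sum_ite_mem, mul_comm,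
    apply_ite (fun n : ℕ∞ => (n : ℝ≥0∞))]

lemma isNash_of_sum_charge_le [Fintype V] {a : ℕ} {S : V → Finset V}
    (h : ∀ v T, ∑ w, charge a S v w ≤ ∑ w, charge a (Function.update S v T) v w) :
    IsNash a S := fun v T _ => by
  rw [netCost_eq_sum_charge, netCost_eq_sum_charge]
  exact_mod_cast h v T

@[simp]
lemma charge_update_self (a : ℕ) (S : V → Finset V) (v w : V) (T : Finset V) :
    charge a (Function.update S v T) v w =
      (if w ∈ T then (a : ℕ∞) else 0) + (netGraph (Function.update S v T)).edist v w := by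
  simp [charge]

lemma ite_add_one_le_charge (a : ℕ) (S : V → Finset V) {v w : V} (h : v ≠ w) :
    (if w ∈ S v then (a : ℕ∞) else 0) + 1 ≤ charge a S v w := by
  unfold charge
  gcongr
  exact Order.one_le_iff_pos.2 (SimpleGraph.edist_pos_of_ne h)

lemma netGraph_update_adj_self {S : V → Finset V} {v w : V} {T : Finset V} :
    (netGraph (Function.update S v T)).Adj v w ↔ v ≠ w ∧ (w ∈ T ∨ v ∈ S w) := by
  rcases eq_or_ne w v with rfl | hw
  · simp [netGraph]
  · simp [netGraph, Function.update_of_ne hw]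

lemma netGraph_update_adj_of_notMem {S : V → Finset V} {u v x : V} {T : Finset V}
    (hu : u ≠ v) (huT : u ∉ T) (h : (netGraph (Function.update S v T)).Adj u x) :
    (netGraph S).Adj u x := by
  obtain ⟨hne, hx | hx⟩ := h
  · exact ⟨hne, Or.inl (by rwa [Function.update_of_ne hu] at hx)⟩
  · refine ⟨hne, Or.inr ?_⟩
    rcases eq_or_ne x v with rfl | hxv
    · simp only [Function.update_self] at hx
      exact absurd hx huT
    · rwa [Function.update_of_ne hxv] at hx

lemma two_le_edist_netGraph_update {S : V → Finset V} {v w : V} {T : Finset V}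
    (hne : v ≠ w) (hwT : w ∉ T) (hv : v ∉ S w) :
    2 ≤ (netGraph (Function.update S v T)).edist v w :=
  SimpleGraph.two_le_edist_of_not_adj hne (by simp [netGraph_update_adj_self, hwT, hv])

end Deviation

section Star

variable {M : Type*} [AddCommMonoid M] {a : ℕ} [NeZero a]

lemma sum_fin_ite_zero (x y : M) :
    ∑ j : Fin a, (if j = 0 then x else y) = x + (a - 1) • y := by
  rw [Finset.sum_ite, Finset.sum_const, Finset.sum_const, Finset.filter_eq', Finset.filter_ne',
    if_pos (Finset.mem_univ _), Finset.card_singleton, one_smul,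
    Finset.card_erase_of_mem (Finset.mem_univ _), Finset.card_univ, Fintype.card_fin]

lemma sum_le_sum_of_bounds_at_zero [PartialOrder M] [IsOrderedAddMonoid M]
    {f g : Fin a → M} {x y x' y' : M} (hf₀ : f 0 ≤ x) (hf : ∀ j ≠ 0, f j ≤ y)
    (hg₀ : x' ≤ g 0) (hg : ∀ j ≠ 0, y' ≤ g j) (h : x + (a - 1) • y ≤ x' + (a - 1) • y') :
    ∑ j, f j ≤ ∑ j, g j :=
  calc ∑ j, f j ≤ ∑ j : Fin a, (if j = 0 then x else y) :=
        Finset.sum_le_sum fun j _ => by split_ifs with hj <;> [exact hj ▸ hf₀; exact hf j hj]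
    _ = x + (a - 1) • y := sum_fin_ite_zero x y
    _ ≤ x' + (a - 1) • y' := h
    _ = ∑ j : Fin a, (if j = 0 then x' else y') := (sum_fin_ite_zero x' y').symm
    _ ≤ ∑ j, g j :=
        Finset.sum_le_sum fun j _ => by split_ifs with hj <;> [exact hj ▸ hg₀; exact hg j hj]

end Star

lemma ENat.natCast_add_one_add_sub_one_nsmul_two {a : ℕ} (ha : a ≠ 0) :
    (a : ℕ∞) + 1 + (a - 1) • 2 = 2 + (a - 1) • 3 := by
  obtain ⟨m, rfl⟩ := Nat.exists_eq_add_one_of_ne_zero ha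
  simp only [Nat.add_sub_cancel, nsmul_eq_mul]
  norm_cast
  ring

structure IsCliqueWithLeaves {a k : ℕ} [NeZero a]
    (S : Fin k × Fin a → Finset (Fin k × Fin a)) : Prop where
  leaf_buys_nothing : ∀ i : Fin k, ∀ j : Fin a, j ≠ 0 → S (i, j) = ∅
  center_buys_leaf : ∀ i : Fin k, ∀ j : Fin a, j ≠ 0 → (i, j) ∈ S (i, 0)
  center_buys_subset : ∀ i : Fin k, ∀ p ∈ S (i, 0),
    (p.1 = i ∧ p.2 ≠ 0) ∨ (p.2 = 0 ∧ p.1 ≠ i)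
  center_buys_center_iff : ∀ i i' : Fin k, i ≠ i' →
    ((i', (0 : Fin a)) ∈ S (i, 0) ↔ (i, (0 : Fin a)) ∉ S (i', 0))

namespace IsCliqueWithLeaves

variable {a k : ℕ} [NeZero a] {S : Fin k × Fin a → Finset (Fin k × Fin a)}

lemma eq_center_of_leaf_mem (hS : IsCliqueWithLeaves S) {i : Fin k} {j : Fin a}
    {x : Fin k × Fin a} (hj : j ≠ 0) (h : (i, j) ∈ S x) : x = (i, 0) := by
  obtain ⟨x₁, x₂⟩ := x
  rcases eq_or_ne x₂ 0 with rfl | hx₂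
  · rcases hS.center_buys_subset x₁ _ h with ⟨rfl, -⟩ | ⟨h₀, -⟩
    · rfl
    · exact absurd h₀ hj
  · simp [hS.leaf_buys_nothing x₁ x₂ hx₂] at h

lemma notMem_self (hS : IsCliqueWithLeaves S) (x : Fin k × Fin a) : x ∉ S x := by
  obtain ⟨i, j⟩ := x
  rcases eq_or_ne j 0 with rfl | hj
  · intro h
    rcases hS.center_buys_subset i _ h with ⟨-, h⟩ | ⟨-, h⟩ <;> exact h rfl
  · simp [hS.leaf_buys_nothing i j hj]

lemma adj_center_center (hS : IsCliqueWithLeaves S) {i i' : Fin k} (h : i ≠ i') :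
    (netGraph S).Adj (i, 0) (i', 0) := by
  have := hS.center_buys_center_iff i i' h
  exact ⟨by simpa using h, by tauto⟩

lemma adj_center_leaf (hS : IsCliqueWithLeaves S) (i : Fin k) {j : Fin a} (hj : j ≠ 0) :
    (netGraph S).Adj (i, 0) (i, j) :=
  ⟨by simpa [eq_comm] using hj, Or.inl (hS.center_buys_leaf i j hj)⟩

lemma eq_center_of_adj_leaf (hS : IsCliqueWithLeaves S) {i : Fin k} {j : Fin a}
    {x : Fin k × Fin a} (hj : j ≠ 0) (h : (netGraph S).Adj (i, j) x) : x = (i, 0) := by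
  obtain ⟨-, hx | hx⟩ := h
  · simp [hS.leaf_buys_nothing i j hj] at hx
  · exact hS.eq_center_of_leaf_mem hj hx

lemma edist_le (hS : IsCliqueWithLeaves S) (i i' : Fin k) (j j' : Fin a) :
    (netGraph S).edist (i, j) (i', j') ≤
      (if j = 0 then 0 else 1) + (if i = i' then 0 else 1) + (if j' = 0 then 0 else 1) := by
  have leaf_center (i : Fin k) (j : Fin a) :
      (netGraph S).edist (i, 0) (i, j) ≤ if j = 0 then 0 else 1 := by
    split_ifs with hj
    · simp [hj]
    · exact (SimpleGraph.edist_eq_one_iff_adj.2 (hS.adj_center_leaf i hj)).le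
  have center_center : (netGraph S).edist (i, 0) (i', 0) ≤ if i = i' then 0 else 1 := by
    split_ifs with hi
    · simp [hi]
    · exact (SimpleGraph.edist_eq_one_iff_adj.2 (hS.adj_center_center hi)).le
  calc (netGraph S).edist (i, j) (i', j')
      ≤ (netGraph S).edist (i, j) (i, 0) + (netGraph S).edist (i, 0) (i', 0)
          + (netGraph S).edist (i', 0) (i', j') :=
        SimpleGraph.edist_triangle.trans (add_le_add_left SimpleGraph.edist_triangle _)
    _ ≤ _ := by
        rw [SimpleGraph.edist_comm (u := (i, j))]
        gcongr
        exacts [leaf_center i j, leaf_center i' j']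

variable {v : Fin k × Fin a} {T : Finset (Fin k × Fin a)}

lemma add_one_le_charge_update_leaf (hS : IsCliqueWithLeaves S) {i : Fin k} {j : Fin a}
    {n : ℕ∞} (hj : j ≠ 0) (hv : v ≠ (i, j)) (hna : n ≤ a)
    (hn : n ≤ (netGraph (Function.update S v T)).edist v (i, 0)) :
    n + 1 ≤ charge a (Function.update S v T) v (i, j) := by
  rw [charge_update_self]
  by_cases hT : (i, j) ∈ T
  · rw [if_pos hT]
    gcongr
    exact Order.one_le_iff_pos.2 (SimpleGraph.edist_pos_of_ne hv)
  · rw [if_neg hT, zero_add]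
    refine (add_le_add_left hn 1).trans
      (SimpleGraph.edist_add_one_le_of_forall_adj_eq hv fun x hx => ?_)
    exact hS.eq_center_of_adj_leaf hj (netGraph_update_adj_of_notMem hv.symm hT hx)

lemma two_le_charge_update_leaf (hS : IsCliqueWithLeaves S) {i : Fin k} {j : Fin a}
    (hj : j ≠ 0) (hv : v ≠ (i, j)) (hc : v ≠ (i, 0)) :
    2 ≤ charge a (Function.update S v T) v (i, j) := by
  have hD := Order.one_le_iff_pos.2 (SimpleGraph.edist_pos_of_ne
    (G := netGraph (Function.update S v T)) hc)
  simpa [one_add_one_eq_two] using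
    hS.add_one_le_charge_update_leaf hj hv (by simpa using NeZero.one_le) hD

lemma add_one_le_charge_update_own_leaf (hS : IsCliqueWithLeaves S) {i : Fin k} {j : Fin a}
    (hj : j ≠ 0) : (a : ℕ∞) + 1 ≤ charge a (Function.update S (i, 0) T) (i, 0) (i, j) := by
  have hne : ((i, 0) : Fin k × Fin a) ≠ (i, j) := by simpa [eq_comm] using hj
  rw [charge_update_self]
  by_cases hT : (i, j) ∈ T
  · rw [if_pos hT]
    gcongr
    exact Order.one_le_iff_pos.2 (SimpleGraph.edist_pos_of_ne hne)
  · rw [SimpleGraph.edist_eq_top_of_forall_not_adj hne fun x hx => ?_, add_top]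
    · exact le_top
    obtain rfl := hS.eq_center_of_adj_leaf hj (netGraph_update_adj_of_notMem hne.symm hT hx)
    have hadj := netGraph_update_adj_self.1 hx.symm
    simp [hT, hS.leaf_buys_nothing i j hj] at hadj

lemma sum_charge_le_own_star_of_center (hS : IsCliqueWithLeaves S)
    (T : Finset (Fin k × Fin a)) (i : Fin k) :
    ∑ j, charge a S (i, 0) (i, j) ≤
      ∑ j, charge a (Function.update S (i, 0) T) (i, 0) (i, j) := by
  refine Finset.sum_le_sum fun j _ => ?_
  rcases eq_or_ne j 0 with rfl | hj
  · simp [charge, hS.notMem_self]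
  · calc charge a S (i, 0) (i, j) ≤ a + 1 := by
          rw [charge, if_pos (hS.center_buys_leaf i j hj)]
          simpa [hj] using add_le_add_left (hS.edist_le i i 0 j) (a : ℕ∞)
      _ ≤ _ := hS.add_one_le_charge_update_own_leaf hj

lemma sum_charge_le_own_star_of_leaf (hS : IsCliqueWithLeaves S)
    (T : Finset (Fin k × Fin a)) {i : Fin k} {j₀ : Fin a} (hj₀ : j₀ ≠ 0) :
    ∑ j, charge a S (i, j₀) (i, j) ≤
      ∑ j, charge a (Function.update S (i, j₀) T) (i, j₀) (i, j) := by
  have old_eq (w) : charge a S (i, j₀) w = (netGraph S).edist (i, j₀) w := by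
    simp [charge, hS.leaf_buys_nothing i j₀ hj₀]
  refine Finset.sum_le_sum fun j _ => ?_
  rcases eq_or_ne j j₀ with rfl | hjj₀
  · simp [old_eq]
  rcases eq_or_ne j 0 with rfl | hj
  · calc charge a S (i, j₀) (i, 0) ≤ 1 := by simpa [old_eq, hj₀] using hS.edist_le i i j₀ 0
      _ ≤ (if (i, 0) ∈ T then (a : ℕ∞) else 0) + 1 := le_add_self
      _ ≤ _ := by
          simpa only [Function.update_self] using
            ite_add_one_le_charge a (Function.update S (i, j₀) T) (v := (i, j₀)) (w := (i, 0))
              (by simpa using hj₀)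
  · calc charge a S (i, j₀) (i, j) ≤ 2 := by
          simpa [old_eq, hj₀, hj, one_add_one_eq_two] using hS.edist_le i i j₀ j
      _ ≤ _ := hS.two_le_charge_update_leaf hj (by simpa using hjj₀.symm) (by simpa using hj₀)

lemma sum_charge_le_other_star_of_center (hS : IsCliqueWithLeaves S) (ha : 2 ≤ a)
    (T : Finset (Fin k × Fin a)) {i i' : Fin k} (hi : i' ≠ i) :
    ∑ j, charge a S (i, 0) (i', j) ≤
      ∑ j, charge a (Function.update S (i, 0) T) (i, 0) (i', j) := by
  have hc : ((i, 0) : Fin k × Fin a) ≠ (i', 0) := by simpa using hi.symm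
  have hleaf (j : Fin a) : ((i, 0) : Fin k × Fin a) ≠ (i', j) := by simp [hi.symm]
  have horient := hS.center_buys_center_iff i i' hi.symm
  have old_center :
      charge a S (i, 0) (i', 0) ≤ (if (i', 0) ∈ S (i, 0) then (a : ℕ∞) else 0) + 1 := by
    unfold charge
    gcongr
    simpa [hi.symm] using hS.edist_le i i' 0 0
  have old_leaf (j : Fin a) (hj : j ≠ 0) : charge a S (i, 0) (i', j) ≤ 2 := by
    rw [charge, if_neg fun h => hc (hS.eq_center_of_leaf_mem hj h), zero_add]
    simpa [hi.symm, hj, one_add_one_eq_two] using hS.edist_le i i' 0 j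
  by_cases hkeep : (i', 0) ∈ T ∨ (i, 0) ∈ S (i', 0)
  · refine sum_le_sum_of_bounds_at_zero old_center old_leaf
      (x' := (if (i', 0) ∈ T then (a : ℕ∞) else 0) + 1) ?_
      (fun j hj => hS.two_le_charge_update_leaf hj (hleaf j) hc) ?_
    · simpa only [Function.update_self] using
        ite_add_one_le_charge a (Function.update S (i, 0) T) hc
    · gcongr
      split_ifs <;> simp_all
  · obtain ⟨hT, hv⟩ := not_or.1 hkeep
    have hD := two_le_edist_netGraph_update hc hT hv
    refine sum_le_sum_of_bounds_at_zero old_center old_leaf (x' := 2) (y' := 3)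
      (by simpa [hT] using hD) (fun j hj => ?_) ?_
    · simpa [two_add_one_eq_three] using
        hS.add_one_le_charge_update_leaf hj (hleaf j) (by exact_mod_cast ha) hD
    · rw [if_pos (by tauto), ENat.natCast_add_one_add_sub_one_nsmul_two (NeZero.ne a)]

lemma sum_charge_le_other_star_of_leaf (hS : IsCliqueWithLeaves S) (ha : 2 ≤ a)
    (T : Finset (Fin k × Fin a)) {i i' : Fin k} {j₀ : Fin a} (hj₀ : j₀ ≠ 0)
    (hi : i' ≠ i) :
    ∑ j, charge a S (i, j₀) (i', j) ≤
      ∑ j, charge a (Function.update S (i, j₀) T) (i, j₀) (i', j) := by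
  have hc : ((i, j₀) : Fin k × Fin a) ≠ (i', 0) := by simp [hi.symm]
  have hleaf (j : Fin a) : ((i, j₀) : Fin k × Fin a) ≠ (i', j) := by simp [hi.symm]
  have old_eq (w) : charge a S (i, j₀) w = (netGraph S).edist (i, j₀) w := by
    simp [charge, hS.leaf_buys_nothing i j₀ hj₀]
  have old_center : charge a S (i, j₀) (i', 0) ≤ 2 := by
    simpa [old_eq, hj₀, hi.symm, one_add_one_eq_two] using hS.edist_le i i' j₀ 0
  have old_leaf (j : Fin a) (hj : j ≠ 0) : charge a S (i, j₀) (i', j) ≤ 3 := by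
    simpa [old_eq, hj₀, hi.symm, hj, one_add_one_eq_two, two_add_one_eq_three] using
      hS.edist_le i i' j₀ j
  by_cases hT : (i', 0) ∈ T
  · refine sum_le_sum_of_bounds_at_zero old_center old_leaf (x' := a + 1) (y' := 2) ?_
      (fun j hj => hS.two_le_charge_update_leaf hj (hleaf j) hc) ?_
    · simpa only [Function.update_self, if_pos hT] using
        ite_add_one_le_charge a (Function.update S (i, j₀) T) hc
    · rw [ENat.natCast_add_one_add_sub_one_nsmul_two (NeZero.ne a)]
  · have hv : (i, j₀) ∉ S (i', 0) := fun h =>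
      hi (by simpa using hS.eq_center_of_leaf_mem hj₀ h)
    have hD := two_le_edist_netGraph_update hc hT hv
    refine sum_le_sum_of_bounds_at_zero old_center old_leaf (x' := 2) (y' := 3)
      (by simpa [hT] using hD) (fun j hj => ?_) le_rfl
    simpa [two_add_one_eq_three] using
      hS.add_one_le_charge_update_leaf hj (hleaf j) (by exact_mod_cast ha) hD

end IsCliqueWithLeaves

theorem stmt12_general (a k : ℕ) [NeZero a] (ha : 2 ≤ a)
    (S : Fin k × Fin a → Finset (Fin k × Fin a))
    (hleaf : ∀ i : Fin k, ∀ j : Fin a, j ≠ 0 → S (i, j) = ∅)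
    (hbuyleaf : ∀ i : Fin k, ∀ j : Fin a, j ≠ 0 → (i, j) ∈ S (i, 0))
    (hcliqueS : ∀ i : Fin k, ∀ p ∈ S (i, 0),
      (p.1 = i ∧ p.2 ≠ 0) ∨ (p.2 = 0 ∧ p.1 ≠ i))
    (horient : ∀ i i' : Fin k, i ≠ i' →
      ((i', (0 : Fin a)) ∈ S (i, 0) ↔ (i, (0 : Fin a)) ∉ S (i', 0))) :
    IsNash (a : ℝ) S := by
  have hS : IsCliqueWithLeaves S := ⟨hleaf, hbuyleaf, hcliqueS, horient⟩
  refine isNash_of_sum_charge_le fun ⟨i, j₀⟩ T => ?_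
  rw [Fintype.sum_prod_type, Fintype.sum_prod_type]
  refine Finset.sum_le_sum fun i' _ => ?_
  rcases eq_or_ne j₀ 0 with rfl | hj₀ <;> rcases eq_or_ne i' i with rfl | hi
  · exact hS.sum_charge_le_own_star_of_center T i'
  · exact hS.sum_charge_le_other_star_of_center ha T hi
  · exact hS.sum_charge_le_own_star_of_leaf T hj₀
  · exact hS.sum_charge_le_other_star_of_leaf ha T hj₀ hi

/-- For integer `α ≥ 2`, the clique-with-leaves strategy profile on `n = αk`
vertices is a (weak) Nash equilibrium: the clique vertices `(i, 0)` form a clique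
with each edge bought by exactly one endpoint, each `(i, 0)` buys the edges to its
`α - 1` private leaves `(i, j)` (`j ≠ 0`), and no leaf buys any edge. -/
theorem stmt12 (a k : ℕ) [NeZero a] (ha : 2 ≤ a) (hk : 2 ≤ k)
    (S : Fin k × Fin a → Finset (Fin k × Fin a))
    (hleaf : ∀ i : Fin k, ∀ j : Fin a, j ≠ 0 → S (i, j) = ∅)
    (hbuyleaf : ∀ i : Fin k, ∀ j : Fin a, j ≠ 0 → (i, j) ∈ S (i, 0))
    (hcliqueS : ∀ i : Fin k, ∀ p ∈ S (i, 0),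
      (p.1 = i ∧ p.2 ≠ 0) ∨ (p.2 = 0 ∧ p.1 ≠ i))
    (horient : ∀ i i' : Fin k, i ≠ i' →
      ((i', (0 : Fin a)) ∈ S (i, 0) ↔ (i, (0 : Fin a)) ∉ S (i', 0))) :
    IsNash (a : ℝ) S :=
  stmt12_general a k ha S hleaf hbuyleaf hcliqueS horient
end

section
/- In the clique-with-leaves graph for integer α ≥ 2 (a k-clique where each clique vertex has α−1 pendant leaves), a leaf cannot strictly decrease its cost by buying any single additional edge: buying an edge to a clique vertex or to another leaf decreases its total distance sum by at most α. -/
/-!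
Adding the edge `xu` to a graph changes the distance from `x` to `w` to
`min (d(x, w)) (d(u, w) + 1)`, so the saving at `w` is at most `d(x, w) - d(u, w) - 1`.
In the clique-with-leaves graph the distances have a closed form, and the savings vanish
outside the star of `u`: they are at most `1` on each of its `α` vertices when `u` is a clique
vertex, and at most `2`, at `u` itself, when `u` is a leaf.
-/

open scoped ENNReal

/-- The clique-with-leaves graph: vertices `(i, 0)` form a `k`-clique, and for each
`i` the vertices `(i, j)` with `j ≠ 0` are pendant leaves attached to `(i, 0)`. -/
def cliqueLeaves (k a : ℕ) [NeZero a] : SimpleGraph (Fin k × Fin a) where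
  Adj p q := p ≠ q ∧ ((p.2 = 0 ∧ q.2 = 0) ∨ (p.1 = q.1 ∧ (p.2 = 0 ∨ q.2 = 0)))
  symm := ⟨fun p q h => ⟨h.1.symm, by tauto⟩⟩
  loopless := ⟨fun p h => h.1 rfl⟩

namespace SimpleGraph

variable {V : Type*} {G : SimpleGraph V}

theorem Adj.dist_le_dist_add_one {p q : V} (h : G.Adj p q) (t : V) :
    G.dist p t ≤ G.dist q t + 1 := by
  have := h.reachable.dist_triangle_left t
  rw [dist_eq_one_iff_adj.mpr h] at this
  omega

theorem Walk.le_length_of_le_add_one {f : V → ℕ}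
    (hf : ∀ ⦃p q⦄, G.Adj p q → f p ≤ f q + 1)
    {v w : V} (hw : f w = 0) (p : G.Walk v w) : f v ≤ p.length := by
  induction p with
  | nil => omega
  | cons h p ih =>
    have := hf h
    rw [Walk.length_cons]
    omega

theorem Reachable.le_dist_of_le_add_one {f : V → ℕ}
    (hf : ∀ ⦃p q⦄, G.Adj p q → f p ≤ f q + 1)
    {v w : V} (hw : f w = 0) (hr : G.Reachable v w) : f v ≤ G.dist v w := by
  obtain ⟨p, hp⟩ := hr.exists_walk_length_eq_dist
  exact hp ▸ p.le_length_of_le_add_one hf hw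

theorem exists_walk_length_le_of_exists_adj_lt {f : V → ℕ} {w : V}
    (hf : ∀ v, v ≠ w → ∃ q, G.Adj v q ∧ f q < f v) (v : V) :
    ∃ p : G.Walk v w, p.length ≤ f v := by
  induction hn : f v using Nat.strong_induction_on generalizing v with
  | _ n ih =>
    by_cases hv : v = w
    · subst hv
      exact ⟨.nil, Nat.zero_le _⟩
    obtain ⟨q, hq, hlt⟩ := hf v hv
    obtain ⟨p, hp⟩ := ih (f q) (hn ▸ hlt) q rfl
    exact ⟨.cons hq p, by rw [Walk.length_cons]; omega⟩

theorem min_dist_le_dist_sup_edge (G : SimpleGraph V) (x u w : V) :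
    min (G.dist x w) (G.dist u w + 1) ≤ (G ⊔ edge x u).dist x w := by
  by_cases hr : (G ⊔ edge x u).Reachable x w
  swap
  · have hG : ¬ G.Reachable x w := fun h => hr (h.mono le_sup_left)
    simp [dist_eq_zero_of_not_reachable hG]
  -- a walk from `v` may cross the new edge in either direction
  let f : V → ℕ := fun v =>
    min (G.dist v w) (min (G.dist v x + 1 + G.dist u w) (G.dist v u + 1 + G.dist x w))
  have hf : ∀ ⦃p q⦄, (G ⊔ edge x u).Adj p q → f p ≤ f q + 1 := by
    intro p q h
    rcases (sup_adj _ _ _ _).mp h with h | h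
    · have := h.dist_le_dist_add_one w
      have := h.dist_le_dist_add_one x
      have := h.dist_le_dist_add_one u
      simp only [f]
      omega
    · have hxu : G.dist x u = G.dist u x := dist_comm
      rcases (edge_adj _ _ _ _).mp h with ⟨⟨rfl, rfl⟩ | ⟨rfl, rfl⟩, -⟩ <;>
        simp only [f, dist_self] <;> omega
  have := hr.le_dist_of_le_add_one hf (by simp [f])
  simp only [f, dist_self] at this
  omega

theorem sum_dist_le_sum_add_sum_dist_sup_edge [Fintype V] {x u : V} {g : V → ℕ}
    (hg : ∀ w, G.dist x w ≤ G.dist u w + 1 + g w) :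
    ∑ w, G.dist x w ≤ ∑ w, g w + ∑ w, (G ⊔ edge x u).dist x w := by
  rw [← Finset.sum_add_distrib]
  refine Finset.sum_le_sum fun w _ => ?_
  have := G.min_dist_le_dist_sup_edge x u w
  have := hg w
  omega

end SimpleGraph

open SimpleGraph

section CliqueLeaves

variable {k a : ℕ} [NeZero a]

-- one step for each endpoint that is a leaf, one for changing clique vertex
def cliqueLeavesDist (p q : Fin k × Fin a) : ℕ :=
  if p = q then 0
  else (if p.2 = 0 then 0 else 1) + (if q.2 = 0 then 0 else 1) + (if p.1 = q.1 then 0 else 1)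

theorem cliqueLeavesDist_le_add_one_of_adj {p q : Fin k × Fin a} (h : (cliqueLeaves k a).Adj p q)
    (w : Fin k × Fin a) : cliqueLeavesDist p w ≤ cliqueLeavesDist q w + 1 := by
  obtain ⟨hpq, h⟩ := h
  unfold cliqueLeavesDist
  split_ifs <;> simp_all [Prod.ext_iff]

theorem exists_adj_cliqueLeavesDist_lt {p w : Fin k × Fin a} (hpw : p ≠ w) :
    ∃ q, (cliqueLeaves k a).Adj p q ∧ cliqueLeavesDist q w < cliqueLeavesDist p w := by
  by_cases hp : p.2 = 0
  · by_cases h1 : p.1 = w.1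
    · have hw : w.2 ≠ 0 := fun hw => hpw (Prod.ext h1 (hp.trans hw.symm))
      refine ⟨w, ⟨hpw, Or.inr ⟨h1, Or.inl hp⟩⟩, ?_⟩
      simp [cliqueLeavesDist, hpw, hw]
    · refine ⟨(w.1, 0), ⟨?_, Or.inl ⟨hp, rfl⟩⟩, ?_⟩
      · simp [Prod.ext_iff, h1]
      · unfold cliqueLeavesDist; split_ifs <;> simp_all [Prod.ext_iff]
  · refine ⟨(p.1, 0), ⟨?_, Or.inr ⟨rfl, Or.inr rfl⟩⟩, ?_⟩
    · simp [Prod.ext_iff, hp]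
    · unfold cliqueLeavesDist; split_ifs <;> simp_all [Prod.ext_iff]

theorem cliqueLeaves_dist (p q : Fin k × Fin a) :
    (cliqueLeaves k a).dist p q = cliqueLeavesDist p q := by
  obtain ⟨walk, hwalk⟩ :=
    exists_walk_length_le_of_exists_adj_lt (fun _ => exists_adj_cliqueLeavesDist_lt) p
  refine le_antisymm ((dist_le walk).trans hwalk) ?_
  exact (Walk.reachable walk).le_dist_of_le_add_one
    (fun _ _ h => cliqueLeavesDist_le_add_one_of_adj h q) (by simp [cliqueLeavesDist])

theorem cliqueLeavesDist_le_of_snd_eq_zero {u : Fin k × Fin a} (hu : u.2 = 0)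
    (x w : Fin k × Fin a) :
    cliqueLeavesDist x w ≤ cliqueLeavesDist u w + 1 + if w.1 = u.1 then 1 else 0 := by
  unfold cliqueLeavesDist; split_ifs <;> grind

theorem cliqueLeavesDist_le_of_snd_ne_zero {u : Fin k × Fin a} (hu : u.2 ≠ 0)
    (x w : Fin k × Fin a) :
    cliqueLeavesDist x w ≤ cliqueLeavesDist u w + 1 + if w = u then 2 else 0 := by
  unfold cliqueLeavesDist; split_ifs <;> grind

theorem cliqueLeaves_exists_dist_le_dist_add (ha : 2 ≤ a) (x u : Fin k × Fin a) :
    ∃ g : Fin k × Fin a → ℕ, ∑ w, g w ≤ a ∧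
      ∀ w, (cliqueLeaves k a).dist x w ≤ (cliqueLeaves k a).dist u w + 1 + g w := by
  simp only [cliqueLeaves_dist]
  by_cases hu : u.2 = 0
  · refine ⟨fun w => if w.1 = u.1 then 1 else 0, ?_, cliqueLeavesDist_le_of_snd_eq_zero hu x⟩
    rw [Fintype.sum_prod_type]
    simp [Finset.sum_ite_eq', apply_ite]
  · refine ⟨fun w => if w = u then 2 else 0, ?_, cliqueLeavesDist_le_of_snd_ne_zero hu x⟩
    simpa using ha

end CliqueLeaves

theorem stmt13_general (k a : ℕ) [NeZero a] (ha : 2 ≤ a)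
    (i : Fin k) (j : Fin a)
    (u : Fin k × Fin a) :
    ∑ w, (cliqueLeaves k a).dist (i, j) w ≤
      a + ∑ w, ((cliqueLeaves k a) ⊔
        SimpleGraph.fromEdgeSet {s((i, j), u)}).dist (i, j) w := by
  obtain ⟨g, hg_sum, hg⟩ := cliqueLeaves_exists_dist_le_dist_add ha (i, j) u
  exact (sum_dist_le_sum_add_sum_dist_sup_edge hg).trans (Nat.add_le_add_right hg_sum _)

/-- In the clique-with-leaves graph, a leaf cannot strictly decrease its cost by
buying a single additional edge: any such edge decreases its total distance sum
by at most `α`. -/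
theorem stmt13 (k a : ℕ) [NeZero a] (ha : 2 ≤ a) (hk : 2 ≤ k)
    (i : Fin k) (j : Fin a) (hj : j ≠ 0)
    (u : Fin k × Fin a) (hu : u ≠ (i, j)) :
    ∑ w, (cliqueLeaves k a).dist (i, j) w ≤
      a + ∑ w, ((cliqueLeaves k a) ⊔
        SimpleGraph.fromEdgeSet {s((i, j), u)}).dist (i, j) w :=
  stmt13_general k a ha i j u
end
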